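/- arXiv:1211.2561 — 3 statements merged into one kernel-verified Lean document; each statement's English description precedes it below -/
import Mathlib

section
/- Let (K^{p,q}, ∂, ∂̄) be a bounded double complex of finite-dimensional complex vector spaces. Then for every k, the dimension of the k-th total cohomology H^k_d(Tot K) (with d = ∂ + ∂̄) is at most the sum over p+q = k of the dimensions of the first page E_1^{p,q} ≅ H^{p,q}_{∂̄}(K) of the associated spectral sequence; equivalently, ∑_{p+q=k} dim H^{p,q}_{∂̄}(K) ≥ dim H^k_d(Tot K) (Frölicher inequality). -/
/-!
Filter the total complex by columns, `F^a Tot^k = ⨁_{i ≥ a} K^{i,k-i}`, and compare the graded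
pieces of the cycles `Z = ker d ∩ Tot^k` and of the boundaries `B = d(Tot^{k-1})`, where
`d = ∂ + ∂̄ = p + q`. The leading component of a cycle in `F^a` is `∂̄`-closed, so `gr_a Z` embeds
into `ker ∂̄ ∩ K^{a,k-a}`; and `d x ≡ ∂̄ x mod F^{a+1}` for `x ∈ K^{a,k-a-1}`, so `∂̄ K^{a,k-a-1}`
embeds into `gr_a B`. Summing over `a` gives
`dim Z - dim B ≤ ∑_a (dim (ker ∂̄ ∩ K^{a,k-a}) - dim ∂̄ K^{a,k-a-1})`.
-/

open Module Submodule

section LinearAlgebra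

variable {𝕜 V W : Type*} [DivisionRing 𝕜] [AddCommGroup V] [Module 𝕜 V] [AddCommGroup W]
  [Module 𝕜 W]

theorem Submodule.map_mkQ_le_map_mkQ_of_le_sup {X A F : Submodule 𝕜 V} (h : X ≤ A ⊔ F) :
    X.map F.mkQ ≤ A.map F.mkQ := by
  rwa [map_le_iff_le_comap, comap_map_mkQ, sup_comm]

variable [FiniteDimensional 𝕜 V]

theorem Submodule.finrank_map_add_finrank_inf_ker (f : V →ₗ[𝕜] W) (N : Submodule 𝕜 V) :
    finrank 𝕜 (N.map f) + finrank 𝕜 (N ⊓ LinearMap.ker f : Submodule 𝕜 V) = finrank 𝕜 N := by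
  have h := LinearMap.finrank_range_add_finrank_ker (f ∘ₗ N.subtype)
  rwa [LinearMap.range_comp, range_subtype, LinearMap.ker_comp,
    (equivMapOfInjective N.subtype N.injective_subtype _).finrank_eq, map_comap_subtype] at h

theorem Submodule.finrank_map_mkQ_of_disjoint {X F : Submodule 𝕜 V} (h : Disjoint X F) :
    finrank 𝕜 (X.map F.mkQ) = finrank 𝕜 X := by
  rw [← finrank_map_add_finrank_inf_ker F.mkQ X, ker_mkQ, h.eq_bot, finrank_bot, add_zero]

theorem Submodule.finrank_quotient_comap_subtype_add_finrank {M N : Submodule 𝕜 V} (h : M ≤ N) :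
    finrank 𝕜 (N ⧸ M.comap N.subtype) + finrank 𝕜 M = finrank 𝕜 N := by
  rw [← (comapSubtypeEquivOfLe h).finrank_eq]
  exact finrank_quotient_add_finrank _

/-- `(X ⊓ F a).map (F (a + 1)).mkQ` is the `a`-th graded piece of `X` for the filtration `F`. -/
theorem Submodule.finrank_eq_sum_finrank_map_mkQ {F : ℤ → Submodule 𝕜 V} (hF : Antitone F)
    {X : Submodule 𝕜 V} {lo hi : ℤ} (hlo : X ≤ F lo) (hhi : F hi = ⊥) (h : lo ≤ hi) :
    finrank 𝕜 X = ∑ a ∈ Finset.Ico lo hi, finrank 𝕜 ((X ⊓ F a).map (F (a + 1)).mkQ) := by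
  suffices ∀ n, lo ≤ n → finrank 𝕜 (X ⊓ F lo : Submodule 𝕜 V) =
      ∑ a ∈ Finset.Ico lo n, finrank 𝕜 ((X ⊓ F a).map (F (a + 1)).mkQ) +
        finrank 𝕜 (X ⊓ F n : Submodule 𝕜 V) by
    have := this hi h
    rwa [hhi, inf_bot_eq, finrank_bot, add_zero, inf_eq_left.2 hlo] at this
  intro n hn
  induction n, hn using Int.leInduction with
  | base => simp
  | succ n hn ih =>
    rw [ih, ← Finset.insert_Ico_right_eq_Ico_add_one hn, Finset.sum_insert Finset.right_notMem_Ico,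
      ← finrank_map_add_finrank_inf_ker (F (n + 1)).mkQ (X ⊓ F n), ker_mkQ, inf_assoc,
      inf_eq_right.2 (hF (Int.le_add_one le_rfl))]
    ring

end LinearAlgebra

section DoubleComplex

variable {𝕜 V : Type*} [DivisionRing 𝕜] [AddCommGroup V] [Module 𝕜 V] (K : ℤ × ℤ → Submodule 𝕜 V)

def columnFiltration (k a : ℤ) : Submodule 𝕜 V :=
  ⨆ i, ⨆ (_ : a ≤ i), K (i, k - i)

theorem le_columnFiltration {k a i : ℤ} (h : a ≤ i) : K (i, k - i) ≤ columnFiltration K k a :=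
  le_iSup₂ (f := fun i (_ : a ≤ i) => K (i, k - i)) i h

theorem columnFiltration_antitone (k : ℤ) : Antitone (columnFiltration K k) :=
  fun _ _ hab => iSup₂_le fun _ hi => le_columnFiltration K (hab.trans hi)

theorem columnFiltration_eq_sup (k a : ℤ) :
    columnFiltration K k a = K (a, k - a) ⊔ columnFiltration K k (a + 1) := by
  refine le_antisymm (iSup₂_le fun i hi => ?_)
    (sup_le (le_columnFiltration K le_rfl) (columnFiltration_antitone K k (Int.le_add_one le_rfl)))
  rcases hi.eq_or_lt with rfl | hi
  · exact le_sup_left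
  · exact le_sup_of_le_right (le_columnFiltration K hi)

theorem columnFiltration_eq_bot {k a : ℤ} (h : ∀ i, a ≤ i → K (i, k - i) = ⊥) :
    columnFiltration K k a = ⊥ :=
  eq_bot_iff.2 (iSup₂_le fun i hi => (h i hi).le)

theorem iSup_eq_columnFiltration {k a : ℤ} (h : ∀ i < a, K (i, k - i) = ⊥) :
    ⨆ i, K (i, k - i) = columnFiltration K k a := by
  refine le_antisymm (iSup_le fun i => ?_) (iSup₂_le fun i _ => le_iSup (fun i => K (i, k - i)) i)
  rcases lt_or_ge i a with hi | hi
  · exact (h i hi).trans_le bot_le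
  · exact le_columnFiltration K hi

theorem disjoint_columnFiltration (hK : iSupIndep K) {a b k : ℤ} (h : a + b = k) :
    Disjoint (K (a, b)) (columnFiltration K k (a + 1)) := by
  refine (hK.disjoint_biSup (y := {ij | a < ij.1}) (by simp)).mono_right (iSup₂_le fun i hi => ?_)
  exact le_iSup₂ (f := fun ij (_ : ij ∈ {ij : ℤ × ℤ | a < ij.1}) => K ij) (i, k - i)
    (show a < i by omega)

theorem map_columnFiltration_le {f : V →ₗ[𝕜] V} {r s : ℤ}
    (hf : ∀ i j, (K (i, j)).map f ≤ K (i + r, j + s)) {k k' a a' : ℤ} (hk : k + r + s = k')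
    (ha : a' ≤ a + r) : (columnFiltration K k a).map f ≤ columnFiltration K k' a' := by
  refine map_le_iff_le_comap.2 (iSup₂_le fun i hi => map_le_iff_le_comap.1 ((hf i (k - i)).trans ?_))
  rw [show k - i + s = k' - (i + r) by omega]
  exact le_columnFiltration K (by omega)

variable {K} {p q : V →ₗ[𝕜] V} (hpmap : ∀ i j : ℤ, (K (i, j)).map p ≤ K (i + 1, j))
  (hqmap : ∀ i j : ℤ, (K (i, j)).map q ≤ K (i, j + 1))
include hpmap hqmap

theorem map_add_columnFiltration_le (k a : ℤ) :
    (columnFiltration K k a).map (p + q) ≤ columnFiltration K (k + 1) a :=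
  (map_add_le _ _ _).trans (sup_le
    (map_columnFiltration_le K (s := 0) (by simpa using hpmap) (by ring) (by omega))
    (map_columnFiltration_le K (r := 0) (by simpa using hqmap) (by ring) (by omega)))

theorem ker_inf_columnFiltration_le_sup (hK : iSupIndep K) (k a : ℤ) :
    LinearMap.ker (p + q) ⊓ columnFiltration K k a ≤
      (LinearMap.ker q ⊓ K (a, k - a)) ⊔ columnFiltration K k (a + 1) := by
  rintro x ⟨hx, hxF⟩
  rw [columnFiltration_eq_sup] at hxF
  obtain ⟨u, hu, v, hv, rfl⟩ := mem_sup.1 hxF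
  refine mem_sup.2 ⟨u, ⟨?_, hu⟩, v, hv, rfl⟩
  have hqu : q u ∈ K (a, k - a + 1) := hqmap _ _ (mem_map_of_mem hu)
  have hpu : p u ∈ columnFiltration K (k + 1) (a + 1) := by
    have := hpmap _ _ (mem_map_of_mem hu)
    rw [show k - a = k + 1 - (a + 1) by ring] at this
    exact le_columnFiltration K le_rfl this
  have hdv : (p + q) v ∈ columnFiltration K (k + 1) (a + 1) :=
    map_add_columnFiltration_le hpmap hqmap k (a + 1) (mem_map_of_mem hv)
  have hsum : q u = -(p u + (p + q) v) := by
    rw [eq_neg_iff_add_eq_zero, ← LinearMap.mem_ker.1 hx]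
    simp only [LinearMap.add_apply, map_add]
    abel
  refine LinearMap.mem_ker.2
    (disjoint_def.1 (disjoint_columnFiltration K hK (k := k + 1) (by ring)) _ hqu ?_)
  rw [hsum]
  exact neg_mem (add_mem hpu hdv)

theorem map_le_map_add_inf_sup {lo a : ℤ} (k : ℤ) (hlo : lo ≤ a) :
    (K (a, k - a - 1)).map q ≤
      ((columnFiltration K (k - 1) lo).map (p + q) ⊓ columnFiltration K k a) ⊔
        columnFiltration K k (a + 1) := by
  rintro _ ⟨x, hx, rfl⟩
  have hxF : x ∈ columnFiltration K (k - 1) a :=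
    le_columnFiltration K le_rfl (by rwa [show k - 1 - a = k - a - 1 by ring])
  have hdx : (p + q) x ∈ columnFiltration K k a := by
    have := map_add_columnFiltration_le hpmap hqmap (k - 1) a (mem_map_of_mem hxF)
    rwa [sub_add_cancel] at this
  have hpx : p x ∈ columnFiltration K k (a + 1) := by
    have := hpmap _ _ (mem_map_of_mem hx)
    rw [show k - a - 1 = k - (a + 1) by ring] at this
    exact le_columnFiltration K le_rfl this
  refine mem_sup.2 ⟨(p + q) x, ⟨mem_map_of_mem (columnFiltration_antitone K _ hlo hxF), hdx⟩,
    -p x, neg_mem hpx, ?_⟩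
  simp

variable [FiniteDimensional 𝕜 V] (hK : iSupIndep K)
include hK

theorem finrank_map_mkQ_le_finrank_ker_inf {X : Submodule 𝕜 V} (hX : X ≤ LinearMap.ker (p + q))
    (k a : ℤ) :
    finrank 𝕜 ((X ⊓ columnFiltration K k a).map (columnFiltration K k (a + 1)).mkQ) ≤
      finrank 𝕜 (LinearMap.ker q ⊓ K (a, k - a) : Submodule 𝕜 V) :=
  (finrank_mono (map_mkQ_le_map_mkQ_of_le_sup ((inf_le_inf_right _ hX).trans
    (ker_inf_columnFiltration_le_sup hpmap hqmap hK k a)))).trans (finrank_map_le _ _)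

theorem finrank_map_le_finrank_map_mkQ {lo a : ℤ} (k : ℤ) (hlo : lo ≤ a) :
    finrank 𝕜 ((K (a, k - a - 1)).map q) ≤
      finrank 𝕜 (((columnFiltration K (k - 1) lo).map (p + q) ⊓ columnFiltration K k a).map
        (columnFiltration K k (a + 1)).mkQ) := calc
  _ = finrank 𝕜 (((K (a, k - a - 1)).map q).map (columnFiltration K k (a + 1)).mkQ) :=
    (finrank_map_mkQ_of_disjoint ((disjoint_columnFiltration K hK (by ring)).mono_left
      (hqmap _ _))).symm
  _ ≤ _ := finrank_mono (map_mkQ_le_map_mkQ_of_le_sup (map_le_map_add_inf_sup hpmap hqmap k hlo))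

theorem finrank_ker_inf_columnFiltration_le (hq : q ∘ₗ q = 0) {k lo hi : ℤ}
    (hhi : columnFiltration K k hi = ⊥) (hlohi : lo ≤ hi) :
    finrank 𝕜 (LinearMap.ker (p + q) ⊓ columnFiltration K k lo : Submodule 𝕜 V) ≤
      ∑ a ∈ Finset.Ico lo hi,
        finrank 𝕜 ((LinearMap.ker q ⊓ K (a, k - a) : Submodule 𝕜 V) ⧸
          ((K (a, k - a - 1)).map q).comap (LinearMap.ker q ⊓ K (a, k - a)).subtype) +
      finrank 𝕜 ((columnFiltration K (k - 1) lo).map (p + q)) := by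
  have hdbar (a : ℤ) := finrank_quotient_comap_subtype_add_finrank
    (M := (K (a, k - a - 1)).map q) (N := LinearMap.ker q ⊓ K (a, k - a)) <| le_inf
      (by rintro _ ⟨x, -, rfl⟩; exact LinearMap.congr_fun hq x)
      ((hqmap _ _).trans_eq (by rw [sub_add_cancel]))
  have hB : (columnFiltration K (k - 1) lo).map (p + q) ≤ columnFiltration K k lo := by
    simpa using map_add_columnFiltration_le hpmap hqmap (k - 1) lo
  calc
    _ ≤ ∑ a ∈ Finset.Ico lo hi, finrank 𝕜 (LinearMap.ker q ⊓ K (a, k - a) : Submodule 𝕜 V) := by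
      rw [finrank_eq_sum_finrank_map_mkQ (columnFiltration_antitone K k) inf_le_right hhi hlohi]
      exact Finset.sum_le_sum fun a _ =>
        finrank_map_mkQ_le_finrank_ker_inf hpmap hqmap hK inf_le_left k a
    _ = _ + ∑ a ∈ Finset.Ico lo hi, finrank 𝕜 ((K (a, k - a - 1)).map q) := by
      rw [← Finset.sum_add_distrib]
      exact Finset.sum_congr rfl fun a _ => (hdbar a).symm
    _ ≤ _ := by
      rw [finrank_eq_sum_finrank_map_mkQ (columnFiltration_antitone K k) hB hhi hlohi]
      gcongr with a ha
      exact finrank_map_le_finrank_map_mkQ hpmap hqmap hK k (Finset.mem_Ico.1 ha).1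

end DoubleComplex

theorem Finset.sum_le_sum_filter_fst_add_snd_eq {M : Type*} [AddCommMonoid M] [PartialOrder M]
    [CanonicallyOrderedAdd M] {g : ℤ × ℤ → M} {S : Finset (ℤ × ℤ)} (hg : ∀ ij ∉ S, g ij = 0)
    (s : Finset ℤ) (k : ℤ) :
    ∑ a ∈ s, g (a, k - a) ≤ ∑ ij ∈ S.filter (fun ij => ij.1 + ij.2 = k), g ij := by
  classical
  rw [← Finset.sum_image (g := fun a => (a, k - a)) fun a _ b _ h => congrArg Prod.fst h]
  refine Finset.sum_le_sum_of_ne_zero fun ij hij hne => Finset.mem_filter.2 ⟨?_, ?_⟩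
  · exact not_not.1 (mt (hg ij) hne)
  · obtain ⟨a, -, rfl⟩ := Finset.mem_image.1 hij
    simp

/-- Frölicher inequality for a bounded double complex of finite-dimensional complex
vector spaces (modeled as an internally graded module `V` with bigrading `K` supported
on a finite set `S`): for every total degree `k`, the dimension of the total (de Rham)
cohomology in degree `k` is at most the sum over `p + q = k` of the dimensions of the
`∂̄`-cohomologies (the first page of the Hodge–Frölicher spectral sequence). -/
theorem stmt5 {V : Type*} [AddCommGroup V] [Module ℂ V] [FiniteDimensional ℂ V]
    (K : ℤ × ℤ → Submodule ℂ V)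
    (hinternal : DirectSum.IsInternal K)
    (S : Finset (ℤ × ℤ)) (hbounded : ∀ ij, ij ∉ S → K ij = ⊥)
    (p q : V →ₗ[ℂ] V)
    (hpmap : ∀ i j : ℤ, Submodule.map p (K (i, j)) ≤ K (i + 1, j))
    (hqmap : ∀ i j : ℤ, Submodule.map q (K (i, j)) ≤ K (i, j + 1))
    (hp : p ∘ₗ p = 0) (hq : q ∘ₗ q = 0) (hpq : p ∘ₗ q + q ∘ₗ p = 0) :
    ∀ k : ℤ,
      Module.finrank ℂ
        ((LinearMap.ker (p + q) ⊓ (⨆ i : ℤ, K (i, k - i)) : Submodule ℂ V) ⧸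
          Submodule.comap (LinearMap.ker (p + q) ⊓ (⨆ i : ℤ, K (i, k - i))).subtype
            (Submodule.map (p + q) (⨆ i : ℤ, K (i, k - 1 - i))))
      ≤ ∑ ij ∈ S.filter (fun ij => ij.1 + ij.2 = k),
          Module.finrank ℂ
            ((LinearMap.ker q ⊓ K ij : Submodule ℂ V) ⧸
              Submodule.comap (LinearMap.ker q ⊓ K ij).subtype
                (Submodule.map q (K (ij.1, ij.2 - 1)))) := by
  intro k
  obtain ⟨N, hN⟩ : ∃ N : ℕ, ∀ ij : ℤ × ℤ, N ≤ ij.1.natAbs → K ij = ⊥ :=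
    ⟨S.sup (·.1.natAbs) + 1, fun ij h => hbounded ij fun hS => by
      have := Finset.le_sup (f := fun ij : ℤ × ℤ => ij.1.natAbs) hS; omega⟩
  have hd : (p + q) ∘ₗ (p + q) = 0 := by
    rw [LinearMap.comp_add, LinearMap.add_comp, LinearMap.add_comp, hp, hq, zero_add, add_zero]
    exact (add_comm _ _).trans hpq
  have hlo (m : ℤ) : ∀ i < -(N : ℤ), K (i, m - i) = ⊥ := fun i hi => hN _ (by omega)
  rw [iSup_eq_columnFiltration K (hlo k), iSup_eq_columnFiltration K (hlo (k - 1))]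
  have hBZ : (columnFiltration K (k - 1) (-N)).map (p + q) ≤
      LinearMap.ker (p + q) ⊓ columnFiltration K k (-N) := by
    refine le_inf ?_ ?_
    · rintro _ ⟨x, -, rfl⟩
      exact LinearMap.congr_fun hd x
    · simpa using map_add_columnFiltration_le hpmap hqmap (k - 1) (-N)
  have hZ := finrank_ker_inf_columnFiltration_le hpmap hqmap hinternal.submodule_iSupIndep hq
    (columnFiltration_eq_bot K fun i hi => hN (i, k - i) (by omega)) (by omega : -(N : ℤ) ≤ N)
  have hH := finrank_quotient_comap_subtype_add_finrank hBZ
  refine le_trans ?_ (Finset.sum_le_sum_filter_fst_add_snd_eq ?_ (Finset.Ico (-(N : ℤ)) N) k)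
  · dsimp only
    omega
  · intro ij hij
    refine Nat.eq_zero_of_le_zero ((finrank_quotient_le _).trans ?_)
    rw [hbounded ij hij, inf_bot_eq, finrank_bot]
end

section
/- Let H be a finite-dimensional complex inner product space with anticommuting differentials ∂, ∂̄ of square zero admitting adjoints ∂*, ∂̄* (i.e., ⟨∂x, y⟩ = ⟨x, ∂*y⟩ and similarly for ∂̄). Define Δ_BC = (∂∂̄)(∂∂̄)* + (∂∂̄)*(∂∂̄) + (∂̄*∂)(∂̄*∂)* + (∂̄*∂)*(∂̄*∂) + ∂̄*∂̄ + ∂*∂. Then x ∈ ker Δ_BC if and only if ∂x = 0, ∂̄x = 0, and (∂∂̄)*x = 0. -/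
/-- The Bott-Chern Laplacian
`Δ_BC = (∂∂̄)(∂∂̄)* + (∂∂̄)*(∂∂̄) + (∂̄*∂)(∂̄*∂)* + (∂̄*∂)*(∂̄*∂) + ∂̄*∂̄ + ∂*∂`,
with `p = ∂`, `q = ∂̄`, `ps = ∂*`, `qs = ∂̄*`. -/
def deltaBC {H : Type*} [AddCommGroup H] [Module ℂ H]
    (p q ps qs : H →ₗ[ℂ] H) : H →ₗ[ℂ] H :=
  (p ∘ₗ q) ∘ₗ (qs ∘ₗ ps) + (qs ∘ₗ ps) ∘ₗ (p ∘ₗ q)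
    + (qs ∘ₗ p) ∘ₗ (ps ∘ₗ q) + (ps ∘ₗ q) ∘ₗ (qs ∘ₗ p)
    + qs ∘ₗ q + ps ∘ₗ p

/-!
Each of the six summands of `Δ_BC` has the form `B ∘ A` with `B` a formal adjoint of `A`, so
`⟪Δ_BC x, x⟫ = ‖∂̄*∂*x‖² + ‖∂∂̄x‖² + ‖∂*∂̄x‖² + ‖∂̄*∂x‖² + ‖∂̄x‖² + ‖∂x‖²`. Hence `Δ_BC x = 0`
forces every one of these vectors to vanish, among them `∂x`, `∂̄x` and `(∂∂̄)*x = ∂̄*∂*x`;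
conversely these three conditions kill every summand of `Δ_BC x`.
-/

open scoped InnerProductSpace

namespace LinearMap

variable {𝕜 E : Type*} [RCLike 𝕜] [NormedAddCommGroup E] [InnerProductSpace 𝕜 E]

def IsFormalAdjoint (A B : E →ₗ[𝕜] E) : Prop :=
  ∀ x y, ⟪A x, y⟫_𝕜 = ⟪x, B y⟫_𝕜

namespace IsFormalAdjoint

variable {A B C D : E →ₗ[𝕜] E}

theorem symm (h : IsFormalAdjoint A B) : IsFormalAdjoint B A := fun x y => by
  rw [← inner_conj_symm, ← h, inner_conj_symm]

theorem comp (hAB : IsFormalAdjoint A B) (hCD : IsFormalAdjoint C D) :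
    IsFormalAdjoint (A ∘ₗ C) (D ∘ₗ B) := fun x y => by
  rw [comp_apply, comp_apply, hAB, hCD]

theorem inner_comp_self (h : IsFormalAdjoint A B) (x : E) :
    ⟪B (A x), x⟫_𝕜 = (‖A x‖ ^ 2 : 𝕜) := by
  rw [h.symm, inner_self_eq_norm_sq_to_K]

end IsFormalAdjoint

end LinearMap

open LinearMap

theorem re_inner_deltaBC_self {H : Type*} [NormedAddCommGroup H] [InnerProductSpace ℂ H]
    {p q ps qs : H →ₗ[ℂ] H} (hps : IsFormalAdjoint p ps) (hqs : IsFormalAdjoint q qs) (x : H) :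
    RCLike.re ⟪deltaBC p q ps qs x, x⟫_ℂ = ‖qs (ps x)‖ ^ 2 + ‖p (q x)‖ ^ 2 + ‖ps (q x)‖ ^ 2
      + ‖qs (p x)‖ ^ 2 + ‖q x‖ ^ 2 + ‖p x‖ ^ 2 := by
  have h₁ := (hqs.symm.comp hps.symm).inner_comp_self x
  have h₂ := (hps.comp hqs).inner_comp_self x
  have h₃ := (hps.symm.comp hqs).inner_comp_self x
  have h₄ := (hqs.symm.comp hps).inner_comp_self x
  simp only [comp_apply] at h₁ h₂ h₃ h₄
  simp only [deltaBC, LinearMap.add_apply, comp_apply, inner_add_left, h₁, h₂, h₃, h₄,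
    hqs.inner_comp_self, hps.inner_comp_self, map_add]
  norm_cast

theorem stmt8_general {H : Type*} [NormedAddCommGroup H] [InnerProductSpace ℂ H]
    (p q ps qs : H →ₗ[ℂ] H)
    (hps : ∀ x y : H, (inner ℂ (p x) y : ℂ) = inner ℂ x (ps y))
    (hqs : ∀ x y : H, (inner ℂ (q x) y : ℂ) = inner ℂ x (qs y)) :
    ∀ x : H, deltaBC p q ps qs x = 0 ↔ (p x = 0 ∧ q x = 0 ∧ qs (ps x) = 0) := by
  intro x
  constructor
  · intro h
    have hsum := re_inner_deltaBC_self hps hqs x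
    rw [h, inner_zero_left, map_zero, eq_comm] at hsum
    simp (disch := positivity) only [add_eq_zero_iff_of_nonneg, pow_eq_zero_iff, norm_eq_zero] at hsum
    tauto
  · rintro ⟨hp, hq, hqps⟩
    simp [deltaBC, hp, hq, hqps]

/-- `x ∈ ker Δ_BC` iff `∂x = 0`, `∂̄x = 0` and `(∂∂̄)* x = 0`. -/
theorem stmt8 {H : Type*} [NormedAddCommGroup H] [InnerProductSpace ℂ H]
    [FiniteDimensional ℂ H]
    (p q ps qs : H →ₗ[ℂ] H)
    (hp : p ∘ₗ p = 0) (hq : q ∘ₗ q = 0) (hpq : p ∘ₗ q + q ∘ₗ p = 0)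
    (hps : ∀ x y : H, (inner ℂ (p x) y : ℂ) = inner ℂ x (ps y))
    (hqs : ∀ x y : H, (inner ℂ (q x) y : ℂ) = inner ℂ x (qs y)) :
    ∀ x : H, deltaBC p q ps qs x = 0 ↔ (p x = 0 ∧ q x = 0 ∧ qs (ps x) = 0) :=
  stmt8_general p q ps qs hps hqs
end

section
/- Let H be a finite-dimensional complex inner product space with anticommuting square-zero operators ∂, ∂̄ and adjoints ∂*, ∂̄*. Then H admits the orthogonal decomposition H = ker Δ_BC ⊕ im(∂∂̄) ⊕ (im ∂* + im ∂̄*), where Δ_BC is the Bott-Chern Laplacian; consequently the natural map ker Δ_BC → (ker ∂ ∩ ker ∂̄)/im ∂∂̄ is a linear isomorphism. -/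
open LinearMap Submodule

section

variable {𝕜 E F G : Type*} [RCLike 𝕜]
  [NormedAddCommGroup E] [InnerProductSpace 𝕜 E]
  [NormedAddCommGroup F] [InnerProductSpace 𝕜 F]
  [NormedAddCommGroup G] [InnerProductSpace 𝕜 G]

theorem LinearMap.range_comp_le_ker_inf_ker {R M : Type*} [Ring R] [AddCommGroup M] [Module R M]
    {p q : M →ₗ[R] M} (hp : p ∘ₗ p = 0) (hq : q ∘ₗ q = 0) (hpq : p ∘ₗ q + q ∘ₗ p = 0) :
    range (p ∘ₗ q) ≤ ker p ⊓ ker q := by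
  rintro _ ⟨x, rfl⟩
  have hqp : q (p (q x)) = -p (q (q x)) :=
    eq_neg_of_add_eq_zero_right (congr($hpq (q x)))
  refine ⟨congr($hp (q x)), ?_⟩
  simp [hqp, show q (q x) = 0 from congr($hq x)]

theorem LinearMap.ker_add_adjoint_comp_self [FiniteDimensional 𝕜 E] [FiniteDimensional 𝕜 F]
    {S : E →ₗ[𝕜] E} (hS : S.IsPositive) (A : E →ₗ[𝕜] F) :
    ker (S + A.adjoint ∘ₗ A) = ker S ⊓ ker A := by
  refine le_antisymm (fun x hx => ?_) fun x ⟨hSx, hAx⟩ => by simp_all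
  rw [mem_ker, add_apply, comp_apply] at hx
  have hsum : RCLike.re (inner 𝕜 (S x) x) + ‖A x‖ ^ 2 = 0 := by
    have := congr(RCLike.re (inner 𝕜 $hx x))
    rwa [inner_add_left, adjoint_inner_left, map_add, inner_self_eq_norm_sq, inner_zero_left,
      map_zero] at this
  have hAx : A x = 0 := by
    have := hS.re_inner_nonneg_left x
    rw [← norm_eq_zero, ← sq_eq_zero_iff (M₀ := ℝ)]
    linarith [sq_nonneg ‖A x‖]
  exact ⟨by simpa [hAx] using hx, hAx⟩

theorem LinearMap.ker_add_self_comp_adjoint [FiniteDimensional 𝕜 E] [FiniteDimensional 𝕜 F]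
    {S : E →ₗ[𝕜] E} (hS : S.IsPositive) (A : F →ₗ[𝕜] E) :
    ker (S + A ∘ₗ A.adjoint) = ker S ⊓ ker A.adjoint := by
  simpa using ker_add_adjoint_comp_self hS A.adjoint

theorem LinearMap.orthogonal_range_adjoint_sup_range_adjoint [FiniteDimensional 𝕜 E]
    [FiniteDimensional 𝕜 F] [FiniteDimensional 𝕜 G] (p : E →ₗ[𝕜] F) (q : E →ₗ[𝕜] G) :
    (range p.adjoint ⊔ range q.adjoint)ᗮ = ker p ⊓ ker q := by
  rw [← inf_orthogonal, orthogonal_range, orthogonal_range, adjoint_adjoint, adjoint_adjoint]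

theorem Submodule.exists_eq_add_add_of_orthogonal_sup (B C : Submodule 𝕜 E)
    [(B ⊔ C).HasOrthogonalProjection] (v : E) :
    ∃ a ∈ (B ⊔ C)ᗮ, ∃ b ∈ B, ∃ c ∈ C, v = a + b + c := by
  obtain ⟨w, hw, a, ha, rfl⟩ := (B ⊔ C).exists_add_mem_mem_orthogonal v
  obtain ⟨b, hb, c, hc, rfl⟩ := mem_sup.1 hw
  exact ⟨a, ha, b, hb, c, hc, by abel⟩

noncomputable def Submodule.infOrthogonalEquivQuotient {B Z : Submodule 𝕜 E}
    [B.HasOrthogonalProjection] (hBZ : B ≤ Z) :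
    ↥(Z ⊓ Bᗮ) ≃ₗ[𝕜] Z ⧸ B.comap Z.subtype :=
  LinearEquiv.ofBijective ((B.comap Z.subtype).mkQ ∘ₗ inclusion inf_le_left) <| by
    refine ⟨(injective_iff_map_eq_zero _).2 fun x hx => ?_, fun z => ?_⟩
    · rw [comp_apply, mkQ_apply, Quotient.mk_eq_zero, mem_comap] at hx
      exact Subtype.ext (inner_self_eq_zero.1 (inner_left_of_mem_orthogonal hx x.2.2))
    · obtain ⟨⟨z, hz⟩, rfl⟩ := mkQ_surjective _ z
      obtain ⟨b, hb, c, hc, rfl⟩ := B.exists_add_mem_mem_orthogonal z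
      have hcZ : c ∈ Z := by simpa using Z.sub_mem hz (hBZ hb)
      refine ⟨⟨c, hcZ, hc⟩, (Quotient.eq _).2 ?_⟩
      simpa [mem_comap] using B.neg_mem hb

end

theorem deltaBC_adjoint {E : Type*} [NormedAddCommGroup E] [InnerProductSpace ℂ E]
    [FiniteDimensional ℂ E] (p q : E →ₗ[ℂ] E) :
    deltaBC p q p.adjoint q.adjoint =
      (p ∘ₗ q) ∘ₗ (p ∘ₗ q).adjoint + (p ∘ₗ q).adjoint ∘ₗ (p ∘ₗ q)
        + (q.adjoint ∘ₗ p) ∘ₗ (q.adjoint ∘ₗ p).adjoint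
        + (q.adjoint ∘ₗ p).adjoint ∘ₗ (q.adjoint ∘ₗ p)
        + q.adjoint ∘ₗ q + p.adjoint ∘ₗ p := by
  simp only [deltaBC, adjoint_comp, adjoint_adjoint]

theorem ker_deltaBC_adjoint {E : Type*} [NormedAddCommGroup E] [InnerProductSpace ℂ E]
    [FiniteDimensional ℂ E] (p q : E →ₗ[ℂ] E) :
    ker (deltaBC p q p.adjoint q.adjoint) = ker p ⊓ ker q ⊓ (range (p ∘ₗ q))ᗮ := by
  have h₁ := isPositive_self_comp_adjoint (p ∘ₗ q)
  have h₂ := h₁.add (isPositive_adjoint_comp_self (p ∘ₗ q))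
  have h₃ := h₂.add (isPositive_self_comp_adjoint (q.adjoint ∘ₗ p))
  have h₄ := h₃.add (isPositive_adjoint_comp_self (q.adjoint ∘ₗ p))
  have h₅ := h₄.add (isPositive_adjoint_comp_self q)
  rw [deltaBC_adjoint, ker_add_adjoint_comp_self h₅, ker_add_adjoint_comp_self h₄,
    ker_add_adjoint_comp_self h₃, ker_add_self_comp_adjoint h₂, ker_add_adjoint_comp_self h₁,
    ker_self_comp_adjoint, orthogonal_range]
  ext x
  simp only [mem_inf, mem_ker, comp_apply, adjoint_comp, adjoint_adjoint]
  constructor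
  · rintro ⟨⟨⟨⟨⟨h, -⟩, -⟩, -⟩, hq⟩, hp⟩
    exact ⟨⟨hp, hq⟩, h⟩
  · rintro ⟨⟨hp, hq⟩, h⟩
    simp [h, hp, hq]

/-- Orthogonal decomposition `H = ker Δ_BC ⊕ im ∂∂̄ ⊕ (im ∂* + im ∂̄*)`, and the
resulting isomorphism between `Δ_BC`-harmonic elements and Bott-Chern cohomology
`(ker ∂ ∩ ker ∂̄)/im ∂∂̄`. -/
theorem stmt10 {H : Type*} [NormedAddCommGroup H] [InnerProductSpace ℂ H]
    [FiniteDimensional ℂ H]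
    (p q ps qs : H →ₗ[ℂ] H)
    (hp : p ∘ₗ p = 0) (hq : q ∘ₗ q = 0) (hpq : p ∘ₗ q + q ∘ₗ p = 0)
    (hps : ∀ x y : H, (inner ℂ (p x) y : ℂ) = inner ℂ x (ps y))
    (hqs : ∀ x y : H, (inner ℂ (q x) y : ℂ) = inner ℂ x (qs y)) :
    (∀ v : H, ∃ a ∈ LinearMap.ker (deltaBC p q ps qs),
      ∃ b ∈ LinearMap.range (p ∘ₗ q),
        ∃ c ∈ LinearMap.range ps ⊔ LinearMap.range qs, v = a + b + c) ∧
    (∀ a ∈ LinearMap.ker (deltaBC p q ps qs), ∀ b ∈ LinearMap.range (p ∘ₗ q),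
      (inner ℂ a b : ℂ) = 0) ∧
    (∀ a ∈ LinearMap.ker (deltaBC p q ps qs),
      ∀ c ∈ LinearMap.range ps ⊔ LinearMap.range qs, (inner ℂ a c : ℂ) = 0) ∧
    (∀ b ∈ LinearMap.range (p ∘ₗ q),
      ∀ c ∈ LinearMap.range ps ⊔ LinearMap.range qs, (inner ℂ b c : ℂ) = 0) ∧
    Nonempty ((LinearMap.ker (deltaBC p q ps qs) : Submodule ℂ H) ≃ₗ[ℂ]
      (LinearMap.ker p ⊓ LinearMap.ker q : Submodule ℂ H) ⧸
        Submodule.comap (LinearMap.ker p ⊓ LinearMap.ker q).subtype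
          (LinearMap.range (p ∘ₗ q))) := by
  obtain rfl : ps = p.adjoint := by rw [(eq_adjoint_iff p ps).2 hps, adjoint_adjoint]
  obtain rfl : qs = q.adjoint := by rw [(eq_adjoint_iff q qs).2 hqs, adjoint_adjoint]
  have hC := orthogonal_range_adjoint_sup_range_adjoint p q
  have hBZ := range_comp_le_ker_inf_ker hp hq hpq
  have hK : ker (deltaBC p q p.adjoint q.adjoint) =
      (range (p ∘ₗ q) ⊔ (range p.adjoint ⊔ range q.adjoint))ᗮ := by
    rw [ker_deltaBC_adjoint, ← hC, inf_comm, inf_orthogonal]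
  refine ⟨hK ▸ exists_eq_add_add_of_orthogonal_sup _ _, fun a ha b hb => ?_,
    fun a ha c hc => ?_, fun b hb c hc => ?_,
    ⟨.ofEq _ _ (ker_deltaBC_adjoint p q) ≪≫ₗ infOrthogonalEquivQuotient hBZ⟩⟩
  · rw [hK] at ha
    exact inner_left_of_mem_orthogonal (mem_sup_left hb) ha
  · rw [hK] at ha
    exact inner_left_of_mem_orthogonal (mem_sup_right hc) ha
  · exact inner_left_of_mem_orthogonal hc (hC ▸ hBZ hb)
end
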